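/- arXiv:2209.06788 — 2 statements merged into one kernel-verified Lean document; each statement's English description precedes it below -/
import Mathlib

section
/- The Wasserstein-2 distance between two Gaussian measures on ℝ with means μ₁, μ₂ and standard deviations σ₁, σ₂ ≥ 0 equals √((μ₁ − μ₂)² + (σ₁ − σ₂)²). -/
open MeasureTheory ProbabilityTheory ENNReal NNReal

/-! For any coupling `(X, Y)`, `E[(X - Y)²] = (E X - E Y)² + Var[X - Y]`, and by Cauchy–Schwarz
for the covariance `Var[X - Y] ≥ (√Var[X] - √Var[Y])²`; this lower bound only involves the
marginals. For Gaussians it is attained by the comonotone coupling `(σ₁ Z + μ₁, σ₂ Z + μ₂)` with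
`Z` standard normal, under which `X - Y ~ N(μ₁ - μ₂, (σ₁ - σ₂)²)`. -/

/-- The squared Wasserstein-2 cost between two measures on `ℝ`, as an infimum of the
expected squared displacement over all couplings. -/
noncomputable def W2sq (P Q : Measure ℝ) : ℝ≥0∞ :=
  ⨅ (π : Measure (ℝ × ℝ)) (_ : π.map Prod.fst = P) (_ : π.map Prod.snd = Q),
    ∫⁻ p, ENNReal.ofReal ((p.1 - p.2) ^ 2) ∂π

section Moments

variable {Ω : Type*} [MeasurableSpace Ω] {μ : Measure Ω} {X Y : Ω → ℝ}

lemma covariance_sq_le_variance_mul_variance [IsFiniteMeasure μ] (hX : MemLp X 2 μ)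
    (hY : MemLp Y 2 μ) : cov[X, Y; μ] ^ 2 ≤ Var[X; μ] * Var[Y; μ] := by
  have hquad : ∀ t : ℝ, 0 ≤ Var[X; μ] * (t * t) + (-2 * cov[X, Y; μ]) * t + Var[Y; μ] := by
    intro t
    have h := variance_fun_sub (hX.const_mul t) hY
    rw [variance_const_mul, covariance_const_mul_left] at h
    linarith [variance_nonneg (fun ω ↦ t * X ω - Y ω) μ]
  have := discrim_le_zero hquad
  rw [discrim] at this
  linarith

lemma sq_sub_sqrt_variance_le_variance_sub [IsFiniteMeasure μ] (hX : MemLp X 2 μ)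
    (hY : MemLp Y 2 μ) : (√Var[X; μ] - √Var[Y; μ]) ^ 2 ≤ Var[X - Y; μ] := by
  have hcov : cov[X, Y; μ] ≤ √Var[X; μ] * √Var[Y; μ] := by
    rw [← Real.sqrt_mul (variance_nonneg X μ)]
    exact Real.le_sqrt_of_sq_le (covariance_sq_le_variance_mul_variance hX hY)
  rw [variance_sub hX hY, sub_sq, Real.sq_sqrt (variance_nonneg X μ),
    Real.sq_sqrt (variance_nonneg Y μ)]
  linarith

lemma le_integral_sq_sub [IsProbabilityMeasure μ] (hX : MemLp X 2 μ) (hY : MemLp Y 2 μ) :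
    (μ[X] - μ[Y]) ^ 2 + (√Var[X; μ] - √Var[Y; μ]) ^ 2 ≤ ∫ ω, (X ω - Y ω) ^ 2 ∂μ := by
  have hvar := variance_eq_sub (hX.sub hY)
  simp only [Pi.pow_apply, Pi.sub_apply] at hvar
  rw [integral_sub (hX.integrable one_le_two) (hY.integrable one_le_two)] at hvar
  linarith [sq_sub_sqrt_variance_le_variance_sub hX hY]

end Moments

lemma le_W2sq_of_memLp {P Q : Measure ℝ} [IsProbabilityMeasure P] (hP : MemLp id 2 P)
    (hQ : MemLp id 2 Q) :
    ENNReal.ofReal ((∫ x, x ∂P - ∫ x, x ∂Q) ^ 2 + (√Var[id; P] - √Var[id; Q]) ^ 2)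
      ≤ W2sq P Q := by
  refine le_iInf fun π ↦ le_iInf fun hπP ↦ le_iInf fun hπQ ↦ ?_
  subst hπP hπQ
  have : IsProbabilityMeasure π := Measure.isProbabilityMeasure_of_map Prod.fst
  have hX : MemLp Prod.fst 2 π :=
    (memLp_map_measure_iff aestronglyMeasurable_id measurable_fst.aemeasurable).mp hP
  have hY : MemLp Prod.snd 2 π :=
    (memLp_map_measure_iff aestronglyMeasurable_id measurable_snd.aemeasurable).mp hQ
  rw [integral_map (f := fun x ↦ x) measurable_fst.aemeasurable aestronglyMeasurable_id,
    integral_map (f := fun x ↦ x) measurable_snd.aemeasurable aestronglyMeasurable_id,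
    variance_id_map measurable_fst.aemeasurable, variance_id_map measurable_snd.aemeasurable]
  exact (ENNReal.ofReal_le_ofReal (le_integral_sq_sub hX hY)).trans_eq
    (ofReal_integral_eq_lintegral_ofReal (hX.sub hY).integrable_sq
      (Filter.Eventually.of_forall fun _ ↦ sq_nonneg _))

lemma W2sq_map_le_lintegral {α : Type*} [MeasurableSpace α] (ν : Measure α) {f g : α → ℝ}
    (hf : Measurable f) (hg : Measurable g) :
    W2sq (ν.map f) (ν.map g) ≤ ∫⁻ x, ENNReal.ofReal ((f x - g x) ^ 2) ∂ν := by
  have hfg : Measurable fun x ↦ (f x, g x) := hf.prodMk hg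
  refine iInf_le_of_le (ν.map fun x ↦ (f x, g x)) ?_
  rw [Measure.map_map measurable_fst hfg, Measure.map_map measurable_snd hfg,
    lintegral_map (by fun_prop) hfg]
  exact iInf_le_of_le rfl (iInf_le_of_le rfl le_rfl)

lemma gaussianReal_map_affine (a b : ℝ) :
    (gaussianReal 0 1).map (fun x ↦ a * x + b) = gaussianReal b (.mk (a ^ 2) (sq_nonneg a)) := by
  have : (fun x ↦ a * x + b) = (· + b) ∘ (a * ·) := rfl
  rw [this, ← Measure.map_map (by fun_prop) (by fun_prop), gaussianReal_map_const_mul,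
    gaussianReal_map_add_const]
  simp only [mul_zero, zero_add, mul_one]

lemma integral_sq_gaussianReal (μ : ℝ) (v : ℝ≥0) : ∫ x, x ^ 2 ∂gaussianReal μ v = μ ^ 2 + v := by
  have h := variance_eq_sub (memLp_id_gaussianReal (μ := μ) (v := v) 2)
  simp only [variance_id_gaussianReal, integral_id_gaussianReal, Pi.pow_apply, id_eq] at h
  linarith

lemma W2sq_gaussianReal_le (μ₁ μ₂ : ℝ) (σ₁ σ₂ : ℝ≥0) :
    W2sq (gaussianReal μ₁ (σ₁ ^ 2)) (gaussianReal μ₂ (σ₂ ^ 2))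
      ≤ ENNReal.ofReal ((μ₁ - μ₂) ^ 2 + ((σ₁ : ℝ) - σ₂) ^ 2) := by
  have hstd (μ : ℝ) (σ : ℝ≥0) :
      gaussianReal μ (σ ^ 2) = (gaussianReal 0 1).map (fun x ↦ σ * x + μ) := by
    rw [gaussianReal_map_affine]; congr
  rw [hstd μ₁, hstd μ₂]
  refine (W2sq_map_le_lintegral _ (by fun_prop) (by fun_prop)).trans_eq ?_
  have hdiff (x : ℝ) : σ₁ * x + μ₁ - (σ₂ * x + μ₂) = ((σ₁ : ℝ) - σ₂) * x + (μ₁ - μ₂) := by ring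
  simp_rw [hdiff]
  rw [← lintegral_map (f := fun y ↦ ENNReal.ofReal (y ^ 2)) (by fun_prop) (by fun_prop),
    gaussianReal_map_affine, ← ofReal_integral_eq_lintegral_ofReal (f := (· ^ 2))
      (memLp_id_gaussianReal 2).integrable_sq (Filter.Eventually.of_forall fun _ ↦ sq_nonneg _),
    integral_sq_gaussianReal]
  rfl

/-- The Wasserstein-2 distance between two univariate Gaussians `N(μ₁, σ₁²)` and
`N(μ₂, σ₂²)` equals `√((μ₁ − μ₂)² + (σ₁ − σ₂)²)`. -/
theorem W2_gaussian_gaussian (μ₁ μ₂ : ℝ) (σ₁ σ₂ : ℝ≥0) :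
    Real.sqrt (W2sq (gaussianReal μ₁ (σ₁ ^ 2)) (gaussianReal μ₂ (σ₂ ^ 2))).toReal
      = Real.sqrt ((μ₁ - μ₂) ^ 2 + ((σ₁ : ℝ) - (σ₂ : ℝ)) ^ 2) := by
  have hlower := le_W2sq_of_memLp (memLp_id_gaussianReal (μ := μ₁) (v := σ₁ ^ 2) 2)
    (memLp_id_gaussianReal (μ := μ₂) (v := σ₂ ^ 2) 2)
  simp only [integral_id_gaussianReal, variance_id_gaussianReal, NNReal.coe_pow,
    Real.sqrt_sq σ₁.coe_nonneg, Real.sqrt_sq σ₂.coe_nonneg] at hlower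
  rw [le_antisymm (W2sq_gaussianReal_le μ₁ μ₂ σ₁ σ₂) hlower,
    ENNReal.toReal_ofReal (by positivity)]
end

section
/- For any finite list of real-valued points x₁, …, x_N in ℝⁿ (distinct) and any target values y₁, …, y_N ∈ ℝ^d, there exists a function f : ℝⁿ → ℝ^d expressible as a finite composition of affine maps and coordinatewise ReLU activations (a ReLU feedforward network) with f(xᵢ) = yᵢ for all i. -/
/-- `IsReLUNet f` holds when `f : ℝⁿ → ℝ^d` is a ReLU feedforward network, i.e. a finite
alternating composition of affine maps and coordinatewise ReLU activations, ending with
an affine layer. -/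
inductive IsReLUNet : {n m : ℕ} → ((Fin n → ℝ) → (Fin m → ℝ)) → Prop
  | affine {n m : ℕ} (A : Matrix (Fin m) (Fin n) ℝ) (b : Fin m → ℝ) :
      IsReLUNet (fun x i => (∑ j, A i j * x j) + b i)
  | layer {n m k : ℕ} (A : Matrix (Fin m) (Fin n) ℝ) (b : Fin m → ℝ)
      {g : (Fin m → ℝ) → (Fin k → ℝ)} (hg : IsReLUNet g) :
      IsReLUNet (fun x => g (fun i => max 0 ((∑ j, A i j * x j) + b i)))


/-- The hat-function identity. -/
lemma hat_eval {δ s : ℝ} (hδ : 0 < δ) (h : s = 0 ∨ δ ≤ |s|) :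
    max 0 (s + δ) - 2 * max 0 s + max 0 (s - δ) = if s = 0 then δ else 0 := by
  by_cases hs : s = 0
  · subst hs
    simp [max_eq_right hδ.le, max_eq_left (by linarith : -δ ≤ 0)]
  · have hδs : δ ≤ |s| := h.resolve_left hs
    rw [if_neg hs]
    rcases abs_cases s with ⟨he, _⟩ | ⟨he, _⟩
    · rw [he] at hδs
      rw [max_eq_right (by linarith), max_eq_right (by linarith),
        max_eq_right (by linarith)]
      ring
    · rw [he] at hδs
      rw [max_eq_left (by linarith), max_eq_left (by linarith),
        max_eq_left (by linarith)]
      ring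

/-- Existence of a separating linear functional. -/
lemma exists_sep {n N : ℕ} (x : Fin N → Fin n → ℝ) (hx : Function.Injective x) :
    ∃ w : Fin n → ℝ, Function.Injective (fun i => ∑ j, w j * x i j) := by
  classical
  by_contra h
  push_neg at h
  set ι := {p : Fin N × Fin N // p.1 ≠ p.2} with hι
  let L : ι → ((Fin n → ℝ) →ₗ[ℝ] ℝ) := fun p =>
    ∑ j, (x p.1.1 j - x p.1.2 j) • LinearMap.proj j
  have hLval : ∀ (p : ι) (w : Fin n → ℝ), L p w = ∑ j, (x p.1.1 j - x p.1.2 j) * w j := by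
    intro p w
    simp [L, LinearMap.sum_apply]
  have hcov : ⋃ p : ι, ((LinearMap.ker (L p) : Submodule ℝ (Fin n → ℝ)) : Set (Fin n → ℝ))
      = Set.univ := by
    ext w
    simp only [Set.mem_iUnion, Set.mem_univ, iff_true, SetLike.mem_coe, LinearMap.mem_ker]
    obtain ⟨i, j, hij, hne⟩ := Function.not_injective_iff.mp (h w)
    refine ⟨⟨(i, j), hne⟩, ?_⟩
    rw [hLval]
    have : ∑ k, (x i k - x j k) * w k = (∑ k, w k * x i k) - ∑ k, w k * x j k := by
      rw [← Finset.sum_sub_distrib]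
      exact Finset.sum_congr rfl fun k _ => by ring
    rw [this, hij, sub_self]
  obtain ⟨p, hp⟩ := Subspace.exists_eq_top_of_iUnion_eq_univ hcov
  have hxne : x p.1.1 ≠ x p.1.2 := fun he => p.2 (hx he)
  obtain ⟨k, hk⟩ := Function.ne_iff.mp hxne
  have : L p (Pi.single k (1:ℝ)) = 0 := by
    rw [← LinearMap.mem_ker, hp]; trivial
  rw [hLval] at this
  apply hk
  have hsum : ∑ j, (x p.1.1 j - x p.1.2 j) * (Pi.single k (1:ℝ) : Fin n → ℝ) j
      = x p.1.1 k - x p.1.2 k := by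
    rw [Finset.sum_eq_single k]
    · simp
    · intro b _ hb; simp [Pi.single_apply, hb]
    · simp
  rw [hsum] at this
  linarith [sub_eq_zero.mp this]

/-- Memorization: for any distinct inputs `x₁, …, x_N ∈ ℝⁿ` and arbitrary targets
`y₁, …, y_N ∈ ℝ^d`, there is a ReLU feedforward network `f` with `f(xᵢ) = yᵢ` for all `i`. -/
theorem relu_network_memorization {n d N : ℕ}
    (x : Fin N → (Fin n → ℝ)) (hx : Function.Injective x) (y : Fin N → (Fin d → ℝ)) :
    ∃ f : (Fin n → ℝ) → (Fin d → ℝ), IsReLUNet f ∧ ∀ i, f (x i) = y i := by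
  classical
  obtain ⟨w, hw⟩ := exists_sep x hx
  set t : Fin N → ℝ := fun i => ∑ j, w j * x i j with ht
  obtain ⟨δ, hδ, hgap⟩ : ∃ δ > 0, ∀ i j : Fin N, i ≠ j → δ ≤ |t i - t j| := by
    set s : Finset ℝ :=
      (Finset.univ.filter fun p : Fin N × Fin N => p.1 ≠ p.2).image
        (fun p => |t p.1 - t p.2|) with hs
    by_cases hse : s.Nonempty
    · refine ⟨s.min' hse, ?_, ?_⟩
      · obtain ⟨a, ha, hav⟩ := Finset.mem_image.mp (s.min'_mem hse)
        have hne : a.1 ≠ a.2 := (Finset.mem_filter.mp ha).2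
        have : t a.1 ≠ t a.2 := fun h => hne (hw h)
        rw [← hav]
        exact abs_pos.mpr (sub_ne_zero.mpr this)
      · intro i j hij
        exact s.min'_le _ (Finset.mem_image.mpr
          ⟨(i, j), Finset.mem_filter.mpr ⟨Finset.mem_univ _, hij⟩, rfl⟩)
    · refine ⟨1, one_pos, fun i j hij => absurd ?_ hse⟩
      exact ⟨_, Finset.mem_image.mpr
        ⟨(i, j), Finset.mem_filter.mpr ⟨Finset.mem_univ _, hij⟩, rfl⟩⟩
  let e : Fin 3 × Fin N ≃ Fin (3 * N) := finProdFinEquiv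
  let sh : Fin 3 → ℝ := ![δ, 0, -δ]
  let co : Fin 3 → ℝ := ![1, -2, 1]
  refine ⟨_, IsReLUNet.layer (n := n) (m := 3 * N) (fun _ j => w j)
      (fun k => sh (e.symm k).1 - t (e.symm k).2)
      (IsReLUNet.affine (fun l k => co (e.symm k).1 * y (e.symm k).2 l / δ) 0),
    fun p => ?_⟩
  funext l
  show (∑ k : Fin (3 * N), co (e.symm k).1 * y (e.symm k).2 l / δ *
      max 0 (t p + (sh (e.symm k).1 - t (e.symm k).2))) + 0 = y p l
  have inner : ∀ i : Fin N,
      ∑ a : Fin 3, co a * y i l / δ * max 0 (t p + (sh a - t i))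
        = if i = p then y i l else 0 := by
    intro i
    have hs0 : t p - t i = 0 ∨ δ ≤ |t p - t i| := by
      by_cases hip : p = i
      · left; rw [hip, sub_self]
      · right; exact hgap p i hip
    have key := hat_eval hδ hs0
    simp only [show ∀ a : Fin 3, t p + (sh a - t i) = t p - t i + sh a from
      fun a => by ring]
    rw [Fin.sum_univ_three]
    simp only [sh, co, Matrix.cons_val_zero, Matrix.cons_val_one, Matrix.head_cons,
      Matrix.cons_val_two, Matrix.tail_cons, add_zero, ← sub_eq_add_neg]
    have hiff : (t p - t i = 0) ↔ (i = p) := by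
      rw [sub_eq_zero]
      exact ⟨fun h => (hw h).symm, fun h => by rw [h]⟩
    have hcomb : 1 * y i l / δ * max 0 (t p - t i + δ) +
        -2 * y i l / δ * max 0 (t p - t i) + 1 * y i l / δ * max 0 (t p - t i - δ)
        = y i l / δ * (max 0 (t p - t i + δ) - 2 * max 0 (t p - t i) +
            max 0 (t p - t i - δ)) := by ring
    rw [hcomb, key]
    by_cases hip : i = p
    · rw [if_pos (hiff.mpr hip), if_pos hip]
      field_simp
    · rw [if_neg (fun h => hip (hiff.mp h)), if_neg hip, mul_zero]
  rw [add_zero, ← Equiv.sum_comp e (fun k => co (e.symm k).1 * y (e.symm k).2 l / δ *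
      max 0 (t p + (sh (e.symm k).1 - t (e.symm k).2)))]
  simp only [Equiv.symm_apply_apply]
  rw [Fintype.sum_prod_type, Finset.sum_comm]
  rw [Finset.sum_congr rfl (fun i _ => inner i)]
  simp
end
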